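/- Define g : ℕ → ℕ by g(1) = 1 and g(n) = g(n - g(n-1)) + 1 for n ≥ 2. Then for every m ≥ 1, the number of indices n with g(n) = m equals m; that is, the frequency sequence of g is F(m) = m. -/
import Mathlib

private def T : ℕ → ℕ
  | 0 => 0
  | m + 1 => T m + (m + 1)

private lemma key (g : ℕ → ℕ) (h1 : g 1 = 1)
    (hrec : ∀ n, 2 ≤ n → g n = g (n - g (n - 1)) + 1) :
    ∀ n, 1 ≤ n → ∀ m k, 1 ≤ k → k ≤ m + 1 → n = T m + k → g n = m + 1 := by
  intro n
  induction n using Nat.strong_induction_on with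
  | _ n IH =>
    intro hn m k hk1 hk2 hnk
    rcases Nat.lt_or_ge n 2 with h2 | h2
    · -- n = 1
      interval_cases n
      · cases m with
        | zero =>
          simp [T] at hnk
          omega
        | succ m' =>
          exfalso
          have : T (m' + 1) = T m' + (m' + 1) := rfl
          omega
    · -- n ≥ 2
      rw [hrec n h2]
      rcases Nat.lt_or_ge 1 k with hk | hk
      · -- k ≥ 2, so n - 1 = T m + (k - 1)
        have hm : 1 ≤ m := by omega
        have hprev : g (n - 1) = m + 1 := by
          apply IH (n - 1) (by omega) (by omega) m (k - 1) (by omega) (by omega)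
          omega
        rw [hprev]
        obtain ⟨m', rfl⟩ : ∃ m', m = m' + 1 := ⟨m - 1, by omega⟩
        have hT : T (m' + 1) = T m' + (m' + 1) := rfl
        have harg : n - (m' + 1 + 1) = T m' + (k - 1) := by omega
        have := IH (n - (m' + 1 + 1)) (by omega) (by omega) m' (k - 1) (by omega) (by omega) harg
        omega
      · -- k = 1, n = T m + 1
        have hk' : k = 1 := by omega
        subst hk'
        obtain ⟨m', rfl⟩ : ∃ m', m = m' + 1 := by
          cases m with
          | zero => exfalso; simp [T] at hnk; omega
          | succ m' => exact ⟨m', rfl⟩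
        have hT : T (m' + 1) = T m' + (m' + 1) := rfl
        have hprev : g (n - 1) = m' + 1 := by
          apply IH (n - 1) (by omega) (by omega) m' (m' + 1) (by omega) (by omega)
          omega
        rw [hprev]
        have harg : n - (m' + 1) = T m' + 1 := by omega
        have := IH (n - (m' + 1)) (by omega) (by omega) m' 1 (by omega) (by omega) harg
        omega

private lemma exists_interval : ∀ n, 1 ≤ n → ∃ m, T m < n ∧ n ≤ T (m + 1) := by
  intro n
  induction n with
  | zero => omega
  | succ n IH =>
    intro _
    rcases Nat.lt_or_ge n 1 with h | h
    · exact ⟨0, by simp [T]; omega⟩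
    · obtain ⟨m, hm1, hm2⟩ := IH h
      rcases Nat.lt_or_ge n (T (m + 1)) with h' | h'
      · exact ⟨m, by omega⟩
      · refine ⟨m + 1, by omega, ?_⟩
        have : T (m + 1 + 1) = T (m + 1) + (m + 2) := rfl
        omega

/-- The frequency sequence of Golomb's sequence is F(m) = m. -/
theorem stmt2 (g : ℕ → ℕ) (h1 : g 1 = 1)
    (hrec : ∀ n, 2 ≤ n → g n = g (n - g (n - 1)) + 1) :
    ∀ m, 1 ≤ m → {n : ℕ | 1 ≤ n ∧ g n = m}.ncard = m := by
  intro m hm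
  obtain ⟨m', rfl⟩ : ∃ m', m = m' + 1 := ⟨m - 1, by omega⟩
  have hset : {n : ℕ | 1 ≤ n ∧ g n = m' + 1} = Set.Ioc (T m') (T (m' + 1)) := by
    ext n
    simp only [Set.mem_setOf_eq, Set.mem_Ioc]
    constructor
    · rintro ⟨hn, hgn⟩
      obtain ⟨j, hj1, hj2⟩ := exists_interval n hn
      have := key g h1 hrec n hn j (n - T j) (by omega) (by
        have : T (j + 1) = T j + (j + 1) := rfl
        omega) (by omega)
      have hjm : j = m' := by omega
      subst hjm
      exact ⟨hj1, hj2⟩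
    · rintro ⟨hn1, hn2⟩
      have hT : T (m' + 1) = T m' + (m' + 1) := rfl
      refine ⟨by omega, ?_⟩
      exact key g h1 hrec n (by omega) m' (n - T m') (by omega) (by omega) (by omega)
  rw [hset, ← Finset.coe_Ioc, Set.ncard_coe_finset, Nat.card_Ioc]
  have : T (m' + 1) = T m' + (m' + 1) := rfl
  omega
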